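/- Let A be a real m×n matrix, b ∈ ℝ^m and ε ∈ ℝ^m with ε ≥ 0. Then exactly one of the following two statements is true: (1) there exists x ∈ ℝ^n with x ≥ 0 and b − ε ≤ A x ≤ b + ε; (2) there exist y₁, y₂ ∈ ℝ^m with y₁ ≥ 0, y₂ ≥ 0, Aᵀy₁ − Aᵀy₂ ≥ 0 (componentwise), and (b+ε)ᵀy₁ − (b−ε)ᵀy₂ ≤ −1. -/

import Mathlib

/-!
With `M = [A; -A]` and `c = (b + ε, ε - b)` the system is `x ≥ 0, M x ≤ c`, and a certificate
`y = (y₁, y₂)` of Farkas' lemma for `M` and `c` can be rescaled so that `cᵀ y ≤ -1`.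
Farkas' lemma follows by separating `c` from the cone spanned by the columns of `M` and the unit
vectors. That cone is closed because, by Carathéodory's theorem for cones, it is the finite union
of the cones spanned by its linearly independent subfamilies, each the image of an orthant under
an injective linear map.
-/

open Matrix Function Set

section Caratheodory

variable {ι 𝕜 E : Type*} [Fintype ι] [Field 𝕜] [LinearOrder 𝕜] [IsStrictOrderedRing 𝕜]
  [AddCommGroup E] [Module 𝕜 E]

theorem exists_nonneg_sub_smul_support_ssubset {c g : ι → 𝕜} (hc : 0 ≤ c)
    (hg : support g ⊆ support c) (hpos : ∃ i, 0 < g i) :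
    ∃ t : 𝕜, 0 ≤ c - t • g ∧ support (c - t • g) ⊂ support c := by
  classical
  obtain ⟨i₀, hi₀, hmin⟩ := Finset.exists_min_image (Finset.univ.filter (0 < g ·))
    (fun i => c i / g i) (by simpa [Finset.Nonempty] using hpos)
  rw [Finset.mem_filter] at hi₀
  have ht : 0 ≤ c i₀ / g i₀ := div_nonneg (hc i₀) hi₀.2.le
  refine ⟨c i₀ / g i₀, fun i => ?_, ?_⟩
  · rcases lt_or_ge 0 (g i) with hgi | hgi
    · have hle := hmin i (by simp [hgi])
      rw [le_div_iff₀ hgi] at hle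
      simpa using hle
    · simpa using (mul_nonpos_of_nonneg_of_nonpos ht hgi).trans (hc i)
  · have hsub : support (c - (c i₀ / g i₀) • g) ⊆ support c := fun i hi hci => by
      have hgi : g i = 0 := not_not.mp fun h => hg h hci
      simp [hci, hgi] at hi
    refine (ssubset_iff_of_subset hsub).2 ⟨i₀, hg hi₀.2.ne', ?_⟩
    simp [div_mul_cancel₀ _ hi₀.2.ne']

theorem exists_sum_smul_eq_zero_of_not_linearIndepOn {v : ι → E} {s : Set ι}
    (h : ¬LinearIndepOn 𝕜 v s) :
    ∃ g : ι → 𝕜, support g ⊆ s ∧ ∑ i, g i • v i = 0 ∧ ∃ i, 0 < g i := by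
  classical
  obtain ⟨t, g, hts, hgt, hsum, i, hit, hgi⟩ : ∃ (t : Finset ι) (g : ι → 𝕜), ↑t ⊆ s ∧
      (∀ i ∉ t, g i = 0) ∧ ∑ i ∈ t, g i • v i = 0 ∧ ∃ i ∈ t, g i ≠ 0 := by
    simpa [linearIndepOn_iff''] using h
  have hsupp : support g ⊆ s := fun i hi => hts (by_contra fun h => hi (hgt i h))
  have hsum' : ∑ i, g i • v i = 0 := by
    rw [← hsum, Finset.sum_subset (Finset.subset_univ t) (fun i _ hi => by simp [hgt i hi])]
  rcases hgi.lt_or_gt with hneg | hpos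
  · exact ⟨-g, by rwa [support_neg], by simp [neg_smul, hsum'], i, by simpa using hneg⟩
  · exact ⟨g, hsupp, hsum', i, hpos⟩

/-- Carathéodory's theorem for cones. -/
theorem exists_linearIndepOn_support_sum_smul_eq (v : ι → E) {c : ι → 𝕜} (hc : 0 ≤ c) :
    ∃ d : ι → 𝕜, 0 ≤ d ∧ LinearIndepOn 𝕜 v (support d) ∧ ∑ i, d i • v i = ∑ i, c i • v i := by
  induction hn : (support c).ncard using Nat.strong_induction_on generalizing c with
  | _ n ih =>
  by_cases hli : LinearIndepOn 𝕜 v (support c)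
  · exact ⟨c, hc, hli, rfl⟩
  obtain ⟨g, hgc, hgv, hpos⟩ := exists_sum_smul_eq_zero_of_not_linearIndepOn hli
  obtain ⟨t, hd, hsub⟩ := exists_nonneg_sub_smul_support_ssubset hc hgc hpos
  obtain ⟨e, he, heli, hesum⟩ := ih _ (hn ▸ ncard_lt_ncard hsub) hd rfl
  refine ⟨e, he, heli, hesum.trans ?_⟩
  simp [sub_smul, Finset.sum_sub_distrib, mul_smul, ← Finset.smul_sum, hgv]

end Caratheodory

section Cone

variable {ι E : Type*} [Fintype ι] [AddCommGroup E] [Module ℝ E]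

theorem mem_hull_range_iff {v : ι → E} {x : E} :
    x ∈ PointedCone.hull ℝ (range v) ↔ ∃ c : ι → ℝ, 0 ≤ c ∧ ∑ i, c i • v i = x := by
  rw [Submodule.mem_span_range_iff_exists_fun]
  constructor
  · rintro ⟨c, rfl⟩
    exact ⟨fun i => c i, fun i => (c i).2, rfl⟩
  · rintro ⟨c, hc, rfl⟩
    exact ⟨fun i => ⟨c i, hc i⟩, rfl⟩

variable [TopologicalSpace E] [IsTopologicalAddGroup E] [ContinuousSMul ℝ E] [T2Space E]

theorem isClosed_hull_range_of_linearIndependent {v : ι → E} (hv : LinearIndependent ℝ v) :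
    IsClosed (PointedCone.hull ℝ (range v) : Set E) := by
  have hcone : (PointedCone.hull ℝ (range v) : Set E) = Fintype.linearCombination ℝ v '' Ici 0 := by
    ext x
    simp [mem_hull_range_iff, Fintype.linearCombination_apply]
  rw [hcone]
  refine (LinearMap.isClosedEmbedding_of_injective ?_).isClosedMap _ isClosed_Ici
  exact LinearMap.ker_eq_bot.mpr (linearIndependent_iff_injective_fintypeLinearCombination.mp hv)

theorem isClosed_hull_range (v : ι → E) : IsClosed (PointedCone.hull ℝ (range v) : Set E) := by
  classical
  have hcone : (PointedCone.hull ℝ (range v) : Set E) =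
      ⋃ (s : Finset ι) (_ : LinearIndepOn ℝ v s), PointedCone.hull ℝ (range fun i : s => v i) := by
    refine Subset.antisymm (fun x hx => ?_) (iUnion₂_subset fun s _ => ?_)
    · obtain ⟨c, hc, rfl⟩ := mem_hull_range_iff.1 hx
      obtain ⟨d, hd, hli, hsum⟩ := exists_linearIndepOn_support_sum_smul_eq v hc
      refine mem_iUnion₂.2 ⟨(support d).toFinset, by rwa [coe_toFinset], ?_⟩
      refine mem_hull_range_iff.2 ⟨fun i => d i, fun i => hd i, ?_⟩
      rw [← hsum, Finset.sum_coe_sort (f := fun i => d i • v i),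
        Finset.sum_subset (Finset.subset_univ _)]
      intro i _ hi
      simp_all
    · exact Submodule.span_mono (range_comp_subset_range _ v)
  rw [hcone]
  exact isClosed_iUnion_of_finite fun s =>
    isClosed_iUnion_of_finite fun hs => isClosed_hull_range_of_linearIndependent hs

variable [LocallyConvexSpace ℝ E]

theorem exists_strongDual_of_notMem_hull_range (v : ι → E) {b : E}
    (hb : b ∉ PointedCone.hull ℝ (range v)) :
    ∃ f : StrongDual ℝ E, (∀ i, 0 ≤ f (v i)) ∧ f b < 0 := by
  obtain ⟨f, hf, hfb⟩ := ProperCone.hyperplane_separation_point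
    ⟨PointedCone.hull ℝ (range v), isClosed_hull_range v⟩ hb
  exact ⟨f, fun i => hf _ (PointedCone.subset_hull (mem_range_self i)), hfb⟩

end Cone

namespace Matrix

variable {ι κ : Type*} [Fintype κ]

theorem exists_farkas_certificate_le_neg_one_iff (M : Matrix κ ι ℝ) (c : κ → ℝ) :
    (∃ y, 0 ≤ y ∧ 0 ≤ Mᵀ *ᵥ y ∧ c ⬝ᵥ y ≤ -1) ↔ ∃ y, 0 ≤ y ∧ 0 ≤ Mᵀ *ᵥ y ∧ c ⬝ᵥ y < 0 := by
  refine ⟨fun ⟨y, hy, hMy, hcy⟩ => ⟨y, hy, hMy, hcy.trans_lt (by norm_num)⟩, ?_⟩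
  rintro ⟨y, hy, hMy, hcy⟩
  have ht : 0 < -(c ⬝ᵥ y)⁻¹ := neg_pos.2 (inv_lt_zero.2 hcy)
  refine ⟨-(c ⬝ᵥ y)⁻¹ • y, smul_nonneg ht.le hy, ?_, ?_⟩
  · rw [mulVec_smul]
    exact smul_nonneg ht.le hMy
  · rw [dotProduct_smul, smul_eq_mul, neg_mul, inv_mul_cancel₀ hcy.ne]

variable [Fintype ι]

theorem exists_nonneg_mulVec_le_or_exists (M : Matrix κ ι ℝ) (c : κ → ℝ) :
    (∃ x, 0 ≤ x ∧ M *ᵥ x ≤ c) ∨ ∃ y, 0 ≤ y ∧ 0 ≤ Mᵀ *ᵥ y ∧ c ⬝ᵥ y < 0 := by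
  classical
  let v : ι ⊕ κ → κ → ℝ := Sum.elim (fun j => Mᵀ j) (fun k => Pi.single k 1)
  have hv (z : ι ⊕ κ → ℝ) : ∑ p, z p • v p = M *ᵥ (z ∘ Sum.inl) + z ∘ Sum.inr := by
    ext k
    simp [v, Fintype.sum_sum_type, mulVec, dotProduct, Pi.single_apply, mul_comm]
  by_cases hc : c ∈ PointedCone.hull ℝ (range v)
  · obtain ⟨z, hz, rfl⟩ := mem_hull_range_iff.1 hc
    refine .inl ⟨z ∘ Sum.inl, fun j => hz _, ?_⟩
    rw [hv]
    exact le_add_of_nonneg_right fun k => hz _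
  · obtain ⟨f, hfv, hfc⟩ := exists_strongDual_of_notMem_hull_range v hc
    obtain ⟨y, hf⟩ : ∃ y : κ → ℝ, ∀ x, f x = y ⬝ᵥ x :=
      ⟨(dotProductEquiv ℝ κ).symm f.toLinearMap, fun x =>
        (LinearMap.congr_fun ((dotProductEquiv ℝ κ).apply_symm_apply f.toLinearMap) x).symm⟩
    refine .inr ⟨y, fun k => by simpa [v, hf] using hfv (Sum.inr k), fun j => ?_, ?_⟩
    · simpa [v, hf, mulVec, dotProduct, mul_comm] using hfv (Sum.inl j)
    · rwa [hf, dotProduct_comm] at hfc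

theorem not_exists_nonneg_mulVec_le_and_exists (M : Matrix κ ι ℝ) (c : κ → ℝ) :
    ¬((∃ x, 0 ≤ x ∧ M *ᵥ x ≤ c) ∧ ∃ y, 0 ≤ y ∧ 0 ≤ Mᵀ *ᵥ y ∧ c ⬝ᵥ y < 0) := by
  rintro ⟨⟨x, hx, hMx⟩, y, hy, hMy, hcy⟩
  have hcy_nonneg : 0 ≤ c ⬝ᵥ y := calc
    0 ≤ (Mᵀ *ᵥ y) ⬝ᵥ x := dotProduct_nonneg_of_nonneg hMy hx
    _ = y ⬝ᵥ (M *ᵥ x) := by rw [mulVec_transpose, dotProduct_mulVec]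
    _ ≤ y ⬝ᵥ c := dotProduct_le_dotProduct_of_nonneg_left hMx hy
    _ = c ⬝ᵥ y := dotProduct_comm y c
  exact hcy_nonneg.not_gt hcy

theorem farkas (M : Matrix κ ι ℝ) (c : κ → ℝ) :
    Xor (∃ x, 0 ≤ x ∧ M *ᵥ x ≤ c) (∃ y, 0 ≤ y ∧ 0 ≤ Mᵀ *ᵥ y ∧ c ⬝ᵥ y < 0) :=
  (xor_iff_or_and_not_and _ _).2
    ⟨exists_nonneg_mulVec_le_or_exists M c, not_exists_nonneg_mulVec_le_and_exists M c⟩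

end Matrix

theorem art3_farkas_alternative_general (m n : ℕ) (A : Matrix (Fin m) (Fin n) ℝ)
    (b : Fin m → ℝ) (ε : Fin m → ℝ) :
    Xor' (∃ x : Fin n → ℝ, 0 ≤ x ∧ b - ε ≤ A.mulVec x ∧ A.mulVec x ≤ b + ε)
      (∃ y₁ y₂ : Fin m → ℝ, 0 ≤ y₁ ∧ 0 ≤ y₂ ∧
        0 ≤ Aᵀ.mulVec y₁ - Aᵀ.mulVec y₂ ∧
        (b + ε) ⬝ᵥ y₁ - (b - ε) ⬝ᵥ y₂ ≤ -1) := by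
  set M := fromRows A (-A)
  set c := Sum.elim (b + ε) (ε - b)
  have hM (y₁ y₂ : Fin m → ℝ) : Mᵀ *ᵥ Sum.elim y₁ y₂ = Aᵀ *ᵥ y₁ - Aᵀ *ᵥ y₂ := by
    rw [transpose_fromRows, fromCols_mulVec_sumElim, transpose_neg, neg_mulVec, sub_eq_add_neg]
  have hc (y₁ y₂ : Fin m → ℝ) : c ⬝ᵥ Sum.elim y₁ y₂ = (b + ε) ⬝ᵥ y₁ - (b - ε) ⬝ᵥ y₂ := by
    rw [sumElim_dotProduct_sumElim, ← neg_sub b ε, neg_dotProduct, ← sub_eq_add_neg]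
  have hprimal : (∃ x, 0 ≤ x ∧ b - ε ≤ A *ᵥ x ∧ A *ᵥ x ≤ b + ε) ↔ ∃ x, 0 ≤ x ∧ M *ᵥ x ≤ c := by
    refine exists_congr fun x => and_congr_right' ?_
    rw [fromRows_mulVec, Sum.elim_le_elim_iff, neg_mulVec, neg_le, neg_sub, and_comm]
  have hdual : (∃ y₁ y₂ : Fin m → ℝ, 0 ≤ y₁ ∧ 0 ≤ y₂ ∧ 0 ≤ Aᵀ *ᵥ y₁ - Aᵀ *ᵥ y₂ ∧
      (b + ε) ⬝ᵥ y₁ - (b - ε) ⬝ᵥ y₂ ≤ -1) ↔ ∃ y, 0 ≤ y ∧ 0 ≤ Mᵀ *ᵥ y ∧ c ⬝ᵥ y ≤ -1 := by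
    refine ⟨fun ⟨y₁, y₂, h₁, h₂, hA, hb⟩ =>
      ⟨Sum.elim y₁ y₂, Sum.nonneg_elim_iff.2 ⟨h₁, h₂⟩, hM y₁ y₂ ▸ hA, hc y₁ y₂ ▸ hb⟩, ?_⟩
    rintro ⟨y, hy, hMy, hcy⟩
    rw [← Sum.elim_comp_inl_inr y, Sum.nonneg_elim_iff] at hy
    rw [← Sum.elim_comp_inl_inr y, hM] at hMy
    rw [← Sum.elim_comp_inl_inr y, hc] at hcy
    exact ⟨_, _, hy.1, hy.2, hMy, hcy⟩
  rw [hprimal, hdual, exists_farkas_certificate_le_neg_one_iff]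
  exact farkas M c

/-- Exactly one of: (1) there exists `x ≥ 0` with `b - ε ≤ A x ≤ b + ε`;
(2) there exist `y₁, y₂ ≥ 0` with `Aᵀ y₁ - Aᵀ y₂ ≥ 0` and
`(b+ε)ᵀ y₁ - (b-ε)ᵀ y₂ ≤ -1`. -/
theorem art3_farkas_alternative (m n : ℕ) (A : Matrix (Fin m) (Fin n) ℝ)
    (b : Fin m → ℝ) (ε : Fin m → ℝ) (hε : 0 ≤ ε) :
    Xor' (∃ x : Fin n → ℝ, 0 ≤ x ∧ b - ε ≤ A.mulVec x ∧ A.mulVec x ≤ b + ε)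
      (∃ y₁ y₂ : Fin m → ℝ, 0 ≤ y₁ ∧ 0 ≤ y₂ ∧
        0 ≤ Aᵀ.mulVec y₁ - Aᵀ.mulVec y₂ ∧
        (b + ε) ⬝ᵥ y₁ - (b - ε) ⬝ᵥ y₂ ≤ -1) :=
  art3_farkas_alternative_general m n A b ε
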